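/- Let k ≥ 1 be an integer. Let Z : ℝ → ℝ be a continuously differentiable function and let A > 0 and B > 0 be real constants such that, as T → ∞, (∫_0^T (Z(t))^{2k} dt)/(T (log T)^{k²}) → A and (∫_0^T (Z'(t))^{2k} dt)/(T (log T)^{k²+2k}) → B. Then for every real c with 0 < c < (1/(2π)) · ((A/B) · (1/I(k)))^{1/(2k)}, where I(k) := ∫_0^1 dt/(t^{1-2k} + (1-t)^{1-2k}), and for every real T₀, there exists a > T₀ such that the open interval (a, a + c · (2π/log a)) contains no zero of Z. -/

import Mathlib

open MeasureTheory intervalIntegral Set Filter Real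

lemma jensen_step {f f' : ℝ → ℝ} (hderiv : ∀ t, HasDerivAt f (f' t) t)
    (hcont : Continuous f') {k : ℕ} (hk : 1 ≤ k) {a x : ℝ} (hax : a < x) (hfa : f a = 0) :
    f x ^ (2*k) ≤ (x - a)^(2*k - 1) * ∫ t in a..x, f' t ^ (2*k) := by
  have hxa : (0:ℝ) < x - a := by linarith
  set μ : Measure ℝ := volume.restrict (Set.Ioc a x) with hμ
  have huniv : μ Set.univ = ENNReal.ofReal (x - a) := by
    simp [hμ, Measure.restrict_apply, Real.volume_Ioc]
  haveI : IsFiniteMeasure μ := ⟨by rw [huniv]; exact ENNReal.ofReal_lt_top⟩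
  haveI : NeZero μ := by
    refine ⟨fun h => ?_⟩
    rw [h] at huniv
    have := ENNReal.ofReal_pos.2 hxa
    rw [← huniv] at this
    simp at this
  have hconv : ConvexOn ℝ Set.univ (fun y : ℝ => y ^ (2*k)) :=
    (even_two_mul k).convexOn_pow
  have hfi : Integrable f' μ := hcont.integrableOn_Ioc
  have hgi : Integrable (fun t => f' t ^ (2*k)) μ := (hcont.pow _).integrableOn_Ioc
  have hJ := hconv.map_average_le (by fun_prop) isClosed_univ
      (Filter.Eventually.of_forall fun _ => Set.mem_univ _) hfi hgi
  have havg1 : (⨍ t, f' t ∂μ) = (x - a)⁻¹ * ∫ t in a..x, f' t := by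
    rw [average_eq, measureReal_def, huniv, ENNReal.toReal_ofReal hxa.le,
      intervalIntegral.integral_of_le hax.le]
    simp [hμ]
  have havg2 : (⨍ t, f' t ^ (2*k) ∂μ) = (x - a)⁻¹ * ∫ t in a..x, f' t ^ (2*k) := by
    rw [average_eq, measureReal_def, huniv, ENNReal.toReal_ofReal hxa.le,
      intervalIntegral.integral_of_le hax.le]
    simp [hμ]
  have hftc : ∫ t in a..x, f' t = f x := by
    rw [intervalIntegral.integral_eq_sub_of_hasDerivAt
      (fun t _ => hderiv t) (hcont.intervalIntegrable a x), hfa, sub_zero]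
  rw [havg1, havg2, hftc] at hJ
  -- hJ : ((x-a)⁻¹ * f x) ^ (2k) ≤ (x-a)⁻¹ * ∫ f'^2k
  have h2 : ((x - a)⁻¹) ^ (2*k) * (f x) ^ (2*k) ≤ (x - a)⁻¹ * ∫ t in a..x, f' t ^ (2*k) := by
    rw [← mul_pow]; exact hJ
  have h3 := mul_le_mul_of_nonneg_left h2 (le_of_lt (pow_pos hxa (2*k)))
  calc f x ^ (2*k) = (x - a) ^ (2*k) * (((x - a)⁻¹) ^ (2*k) * (f x) ^ (2*k)) := by
        rw [← mul_assoc, ← mul_pow, mul_inv_cancel₀ hxa.ne', one_pow, one_mul]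
    _ ≤ (x - a) ^ (2*k) * ((x - a)⁻¹ * ∫ t in a..x, f' t ^ (2*k)) := h3
    _ = (x - a) ^ (2*k - 1) * ∫ t in a..x, f' t ^ (2*k) := by
        rw [← mul_assoc]
        congr 1
        rw [← pow_sub_one_mul (by positivity : 2*k ≠ 0) (x-a)]
        field_simp

lemma jensen_step' {f f' : ℝ → ℝ} (hderiv : ∀ t, HasDerivAt f (f' t) t)
    (hcont : Continuous f') {k : ℕ} (hk : 1 ≤ k) {x b : ℝ} (hxb : x < b) (hfb : f b = 0) :
    f x ^ (2*k) ≤ (b - x)^(2*k - 1) * ∫ t in x..b, f' t ^ (2*k) := by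
  have hg : ∀ t, HasDerivAt (fun s => f (-s)) (f' (-t) * (-1)) t :=
    fun t => (hderiv (-t)).comp t (hasDerivAt_neg t)
  have hgc : Continuous (fun t => f' (-t) * (-1)) := by
    have := hcont.comp continuous_neg; fun_prop
  have h := jensen_step hg hgc hk (show -b < -x by linarith) (by simpa using hfb)
  simp only [neg_neg] at h
  have heq : (∫ t in (-b)..(-x), (f' (-t) * (-1)) ^ (2*k))
      = ∫ t in x..b, f' t ^ (2*k) := by
    have : ∀ t : ℝ, (f' (-t) * (-1)) ^ (2*k) = f' (-t) ^ (2*k) := by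
      intro t
      rw [mul_pow]
      simp [(even_two_mul k).neg_one_pow]
    simp_rw [this]
    rw [intervalIntegral.integral_comp_neg (fun t => f' t ^ (2*k))]
    simp
  rw [heq] at h
  calc f x ^ (2*k) ≤ (-x - -b) ^ (2*k-1) * ∫ t in x..b, f' t ^ (2*k) := h
    _ = (b - x)^(2*k - 1) * ∫ t in x..b, f' t ^ (2*k) := by ring_nf

lemma rpow_helper {k : ℕ} (hk : 1 ≤ k) {t : ℝ} (ht : 0 ≤ t) :
    t ^ ((1:ℝ) - 2*k) = (t ^ (2*k - 1))⁻¹ := by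
  have h1 : (1:ℝ) - 2*k = -((2*k - 1 : ℕ) : ℝ) := by
    have : (2*k - 1 : ℕ) = 2*k - 1 := rfl
    push_cast [Nat.cast_sub (by omega : 1 ≤ 2*k)]
    ring
  rw [h1, Real.rpow_neg ht, Real.rpow_natCast]

lemma two_sided {f f' : ℝ → ℝ} (hderiv : ∀ t, HasDerivAt f (f' t) t)
    (hcont : Continuous f') {k : ℕ} (hk : 1 ≤ k) {z₁ x z₂ : ℝ}
    (h1 : z₁ < x) (h2 : x < z₂) (hz1 : f z₁ = 0) (hz2 : f z₂ = 0) :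
    f x ^ (2*k) * (((x - z₁)^(2*k-1))⁻¹ + ((z₂ - x)^(2*k-1))⁻¹)
      ≤ ∫ t in z₁..z₂, f' t ^ (2*k) := by
  have hc1 : (0:ℝ) < (x - z₁)^(2*k-1) := pow_pos (by linarith) _
  have hc2 : (0:ℝ) < (z₂ - x)^(2*k-1) := pow_pos (by linarith) _
  have e1 := jensen_step hderiv hcont hk h1 hz1
  have e2 := jensen_step' hderiv hcont hk h2 hz2
  have d1 : f x ^ (2*k) * ((x - z₁)^(2*k-1))⁻¹ ≤ ∫ t in z₁..x, f' t ^ (2*k) := by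
    rw [← div_eq_mul_inv, div_le_iff₀ hc1]
    calc f x ^ (2*k) ≤ (x - z₁)^(2*k-1) * ∫ t in z₁..x, f' t ^ (2*k) := e1
      _ = (∫ t in z₁..x, f' t ^ (2*k)) * (x - z₁)^(2*k-1) := mul_comm _ _
  have d2 : f x ^ (2*k) * ((z₂ - x)^(2*k-1))⁻¹ ≤ ∫ t in x..z₂, f' t ^ (2*k) := by
    rw [← div_eq_mul_inv, div_le_iff₀ hc2]
    calc f x ^ (2*k) ≤ (z₂ - x)^(2*k-1) * ∫ t in x..z₂, f' t ^ (2*k) := e2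
      _ = (∫ t in x..z₂, f' t ^ (2*k)) * (z₂ - x)^(2*k-1) := mul_comm _ _
  have hadd : (∫ t in z₁..x, f' t ^ (2*k)) + (∫ t in x..z₂, f' t ^ (2*k))
      = ∫ t in z₁..z₂, f' t ^ (2*k) :=
    intervalIntegral.integral_add_adjacent_intervals
      ((hcont.pow _).intervalIntegrable _ _) ((hcont.pow _).intervalIntegrable _ _)
  calc f x ^ (2*k) * (((x - z₁)^(2*k-1))⁻¹ + ((z₂ - x)^(2*k-1))⁻¹)
      = f x ^ (2*k) * ((x - z₁)^(2*k-1))⁻¹ + f x ^ (2*k) * ((z₂ - x)^(2*k-1))⁻¹ := by ring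
    _ ≤ (∫ t in z₁..x, f' t ^ (2*k)) + (∫ t in x..z₂, f' t ^ (2*k)) := add_le_add d1 d2
    _ = ∫ t in z₁..z₂, f' t ^ (2*k) := hadd

lemma subst_int {k : ℕ} (hk : 1 ≤ k) {z₁ z₂ : ℝ} (h : z₁ < z₂) :
    ∫ x in z₁..z₂, (((x - z₁)^(2*k-1))⁻¹ + ((z₂ - x)^(2*k-1))⁻¹)⁻¹
      = (z₂ - z₁)^(2*k) *
        ∫ t in (0:ℝ)..1, ((t^(2*k-1))⁻¹ + ((1-t)^(2*k-1))⁻¹)⁻¹ := by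
  set c := z₂ - z₁ with hc
  have hc0 : c ≠ 0 := by rw [hc]; intro h'; linarith [sub_eq_zero.mp h']
  have key := intervalIntegral.integral_comp_mul_add
    (a := 0) (b := 1)
    (fun x => (((x - z₁)^(2*k-1))⁻¹ + ((z₂ - x)^(2*k-1))⁻¹)⁻¹) hc0 z₁
  have h0 : c * 0 + z₁ = z₁ := by ring
  have h1 : c * 1 + z₁ = z₂ := by rw [hc]; ring
  rw [h0, h1] at key
  have hptw : ∀ t : ℝ, (((c * t + z₁ - z₁)^(2*k-1))⁻¹ + ((z₂ - (c * t + z₁))^(2*k-1))⁻¹)⁻¹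
      = c^(2*k-1) * ((t^(2*k-1))⁻¹ + ((1-t)^(2*k-1))⁻¹)⁻¹ := by
    intro t
    have e1 : c * t + z₁ - z₁ = c * t := by ring
    have e2 : z₂ - (c * t + z₁) = c * (1 - t) := by rw [hc]; ring
    rw [e1, e2, mul_pow, mul_pow, mul_inv, mul_inv, ← mul_add, mul_inv, inv_inv]
  simp only [hptw] at key
  rw [intervalIntegral.integral_const_mul] at key
  have : (∫ x in z₁..z₂, (((x - z₁)^(2*k-1))⁻¹ + ((z₂ - x)^(2*k-1))⁻¹)⁻¹)
      = c * (c^(2*k-1) * ∫ t in (0:ℝ)..1, ((t^(2*k-1))⁻¹ + ((1-t)^(2*k-1))⁻¹)⁻¹) := by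
    rw [key, smul_eq_mul, ← mul_assoc, mul_inv_cancel₀ hc0, one_mul]
  rw [this, ← mul_assoc]
  congr 1
  rw [← pow_succ']
  congr 1
  omega

lemma wirtinger {f f' : ℝ → ℝ} (hderiv : ∀ t, HasDerivAt f (f' t) t)
    (hcont : Continuous f') {k : ℕ} (hk : 1 ≤ k) {z₁ z₂ : ℝ}
    (h : z₁ < z₂) (hz1 : f z₁ = 0) (hz2 : f z₂ = 0) :
    ∫ t in z₁..z₂, f t ^ (2*k)
      ≤ (∫ t in (0:ℝ)..1, ((t^(2*k-1))⁻¹ + ((1-t)^(2*k-1))⁻¹)⁻¹)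
        * (z₂ - z₁)^(2*k) * ∫ t in z₁..z₂, f' t ^ (2*k) := by
  set M := ∫ t in z₁..z₂, f' t ^ (2*k) with hM
  have hM0 : 0 ≤ M := intervalIntegral.integral_nonneg h.le
    (fun u _ => (even_two_mul k).pow_nonneg _)
  set D : ℝ → ℝ := fun x => ((x - z₁)^(2*k-1))⁻¹ + ((z₂ - x)^(2*k-1))⁻¹ with hD
  have hDnn : ∀ x ∈ Set.Icc z₁ z₂, 0 ≤ D x := by
    intro x hx
    have h1 : (0:ℝ) ≤ x - z₁ := by linarith [hx.1]
    have h2 : (0:ℝ) ≤ z₂ - x := by linarith [hx.2]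
    have := pow_nonneg h1 (2*k-1)
    have := pow_nonneg h2 (2*k-1)
    positivity
  have hptw : ∀ x ∈ Set.Icc z₁ z₂, f x ^ (2*k) ≤ M * (D x)⁻¹ := by
    intro x hx
    rcases eq_or_lt_of_le hx.1 with h1 | h1
    · rw [← h1, hz1]
      rw [zero_pow (by omega : 2*k ≠ 0)]
      exact mul_nonneg hM0 (inv_nonneg.2 (hDnn z₁ ⟨le_refl _, h.le⟩))
    rcases eq_or_lt_of_le hx.2 with h2 | h2
    · rw [h2, hz2]
      rw [zero_pow (by omega : 2*k ≠ 0)]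
      exact mul_nonneg hM0 (inv_nonneg.2 (hDnn z₂ ⟨h.le, le_refl _⟩))
    · have hts := two_sided hderiv hcont hk h1 h2 hz1 hz2
      have hDpos : 0 < D x := by
        have : (0:ℝ) < ((x - z₁)^(2*k-1))⁻¹ :=
          inv_pos.2 (pow_pos (by linarith) _)
        have h2' : (0:ℝ) ≤ ((z₂ - x)^(2*k-1))⁻¹ :=
          inv_nonneg.2 (pow_nonneg (by linarith) _)
        rw [hD]; dsimp only; linarith
      rw [← div_eq_mul_inv, le_div_iff₀ hDpos]
      exact hts
  -- integrability of the majorant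
  have hβ : (0:ℝ) < ((z₂ - z₁)^(2*k-1))⁻¹ := inv_pos.2 (pow_pos (by linarith) _)
  have hDlb : ∀ x ∈ Set.Icc z₁ z₂, ((z₂ - z₁)^(2*k-1))⁻¹ ≤ D x := by
    intro x hx
    rcases eq_or_lt_of_le hx.1 with h1 | h1
    · have : x - z₁ = 0 := by rw [← h1]; ring
      rw [hD]; dsimp only
      rw [this]
      have h0 : (0:ℝ)^(2*k-1) = 0 := zero_pow (by omega)
      rw [h0, inv_zero, zero_add]
      have : z₂ - x = z₂ - z₁ := by rw [← h1]
      rw [this]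
    · have hp1 : (0:ℝ) < (x - z₁)^(2*k-1) := pow_pos (by linarith) _
      have hle : (x - z₁)^(2*k-1) ≤ (z₂ - z₁)^(2*k-1) :=
        pow_le_pow_left₀ (by linarith) (by linarith [hx.2]) _
      have hfirst : ((z₂ - z₁)^(2*k-1))⁻¹ ≤ ((x - z₁)^(2*k-1))⁻¹ :=
        inv_anti₀ hp1 hle
      have hsecond : (0:ℝ) ≤ ((z₂ - x)^(2*k-1))⁻¹ :=
        inv_nonneg.2 (pow_nonneg (by linarith [hx.2]) _)
      rw [hD]; dsimp only; linarith
  have hDinv_bd : ∀ x ∈ Set.Icc z₁ z₂, (D x)⁻¹ ≤ (z₂ - z₁)^(2*k-1) := by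
    intro x hx
    have := hDlb x hx
    calc (D x)⁻¹ ≤ (((z₂ - z₁)^(2*k-1))⁻¹)⁻¹ := inv_anti₀ hβ this
      _ = (z₂ - z₁)^(2*k-1) := inv_inv _
  have hmeas : Measurable (fun x => M * (D x)⁻¹) := by
    apply Measurable.const_mul
    apply Measurable.inv
    exact (((measurable_id.sub_const z₁).pow_const _).inv).add
      (((measurable_const.sub measurable_id).pow_const _).inv)
  have hint : IntervalIntegrable (fun x => M * (D x)⁻¹) volume z₁ z₂ := by
    rw [intervalIntegrable_iff_integrableOn_Ioc_of_le h.le]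
    refine ⟨hmeas.aestronglyMeasurable.restrict, ?_⟩
    apply MeasureTheory.HasFiniteIntegral.of_bounded
      (C := M * (z₂ - z₁)^(2*k-1))
    rw [MeasureTheory.ae_restrict_iff' measurableSet_Ioc]
    refine Filter.Eventually.of_forall (fun x hx => ?_)
    have hx' : x ∈ Set.Icc z₁ z₂ := Set.Ioc_subset_Icc_self hx
    rw [Real.norm_eq_abs, abs_of_nonneg
      (mul_nonneg hM0 (inv_nonneg.2 (hDnn x hx')))]
    exact mul_le_mul_of_nonneg_left (hDinv_bd x hx') hM0
  have hmono := intervalIntegral.integral_mono_on h.le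
    ((Continuous.pow ?_ _).intervalIntegrable _ _) hint hptw
  · rw [intervalIntegral.integral_const_mul, subst_int hk h] at hmono
    calc ∫ t in z₁..z₂, f t ^ (2*k) ≤ M * ((z₂-z₁)^(2*k) *
          ∫ t in (0:ℝ)..1, ((t^(2*k-1))⁻¹ + ((1-t)^(2*k-1))⁻¹)⁻¹) := hmono
      _ = _ := by ring
  · exact continuous_iff_continuousAt.2
      (fun t => (hderiv t).differentiableAt.continuousAt)

lemma g_meas {k : ℕ} : Measurable (fun t : ℝ => ((t^(2*k-1))⁻¹ + ((1-t)^(2*k-1))⁻¹)⁻¹) :=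
  (((measurable_id.pow_const _).inv).add
    (((measurable_const.sub measurable_id).pow_const _).inv)).inv

lemma g_nonneg {k : ℕ} {t : ℝ} (h0 : 0 ≤ t) (h1 : t ≤ 1) :
    0 ≤ ((t^(2*k-1))⁻¹ + ((1-t)^(2*k-1))⁻¹)⁻¹ := by
  have := pow_nonneg h0 (2*k-1)
  have := pow_nonneg (by linarith : (0:ℝ) ≤ 1 - t) (2*k-1)
  positivity

lemma g_le_one {k : ℕ} (hk : 1 ≤ k) {t : ℝ} (h0 : 0 ≤ t) (h1 : t ≤ 1) :
    ((t^(2*k-1))⁻¹ + ((1-t)^(2*k-1))⁻¹)⁻¹ ≤ 1 := by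
  rcases eq_or_lt_of_le h0 with h | h
  · rw [← h]
    rw [zero_pow] ; swap; · omega
    norm_num
  · have ht : (0:ℝ) < t^(2*k-1) := pow_pos h _
    have ht1 : t^(2*k-1) ≤ 1 := pow_le_one₀ h0 h1
    have h1' : (1:ℝ) ≤ (t^(2*k-1))⁻¹ := (one_le_inv₀ ht).2 ht1
    have h2' : (0:ℝ) ≤ ((1-t)^(2*k-1))⁻¹ :=
      inv_nonneg.2 (pow_nonneg (by linarith) _)
    have hd : (1:ℝ) ≤ (t^(2*k-1))⁻¹ + ((1-t)^(2*k-1))⁻¹ := by linarith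
    calc ((t^(2*k-1))⁻¹ + ((1-t)^(2*k-1))⁻¹)⁻¹ ≤ 1⁻¹ :=
          inv_anti₀ one_pos hd
      _ = 1 := inv_one

lemma g_intble {k : ℕ} (hk : 1 ≤ k) {a b : ℝ} (ha : 0 ≤ a) (hb : b ≤ 1) (hab : a ≤ b) :
    IntervalIntegrable (fun t : ℝ => ((t^(2*k-1))⁻¹ + ((1-t)^(2*k-1))⁻¹)⁻¹)
      volume a b := by
  rw [intervalIntegrable_iff_integrableOn_Ioc_of_le hab]
  refine ⟨g_meas.aestronglyMeasurable.restrict, ?_⟩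
  apply MeasureTheory.HasFiniteIntegral.of_bounded (C := 1)
  rw [MeasureTheory.ae_restrict_iff' measurableSet_Ioc]
  refine Filter.Eventually.of_forall (fun x hx => ?_)
  have h0 : (0:ℝ) ≤ x := le_trans ha hx.1.le
  have h1 : x ≤ 1 := le_trans hx.2 hb
  rw [Real.norm_eq_abs, abs_of_nonneg (g_nonneg h0 h1)]
  exact g_le_one hk h0 h1

lemma Jn_pos {k : ℕ} (hk : 1 ≤ k) :
    0 < ∫ t in (0:ℝ)..1, ((t^(2*k-1))⁻¹ + ((1-t)^(2*k-1))⁻¹)⁻¹ := by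
  set g : ℝ → ℝ := fun t => ((t^(2*k-1))⁻¹ + ((1-t)^(2*k-1))⁻¹)⁻¹ with hg
  have i1 : IntervalIntegrable g volume 0 (1/4) := g_intble hk (le_refl _) (by norm_num) (by norm_num)
  have i2 : IntervalIntegrable g volume (1/4) (3/4) := g_intble hk (by norm_num) (by norm_num) (by norm_num)
  have i3 : IntervalIntegrable g volume (3/4) 1 := g_intble hk (by norm_num) (le_refl _) (by norm_num)
  have hsplit : (∫ t in (0:ℝ)..(1/4), g t) + (∫ t in (1/4:ℝ)..(3/4), g t)
      + (∫ t in (3/4:ℝ)..1, g t) = ∫ t in (0:ℝ)..1, g t := by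
    rw [intervalIntegral.integral_add_adjacent_intervals i1 i2,
      intervalIntegral.integral_add_adjacent_intervals (i1.trans i2) i3]
  have hn1 : 0 ≤ ∫ t in (0:ℝ)..(1/4), g t :=
    intervalIntegral.integral_nonneg (by norm_num)
      (fun u hu => g_nonneg hu.1 (by linarith [hu.2]))
  have hn3 : 0 ≤ ∫ t in (3/4:ℝ)..1, g t :=
    intervalIntegral.integral_nonneg (by norm_num)
      (fun u hu => g_nonneg (by linarith [hu.1]) hu.2)
  set c₀ : ℝ := (2 * 4^(2*k-1))⁻¹ with hc₀
  have hc₀pos : 0 < c₀ := by positivity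
  have hmid : (1/2) * c₀ ≤ ∫ t in (1/4:ℝ)..(3/4), g t := by
    have hconst : (∫ _t in (1/4:ℝ)..(3/4), c₀) = (1/2) * c₀ := by
      rw [intervalIntegral.integral_const]
      norm_num
    rw [← hconst]
    apply intervalIntegral.integral_mono_on (by norm_num)
      (intervalIntegrable_const) i2
    intro x hx
    have hx1 : (1/4:ℝ) ≤ x := hx.1
    have hx2 : x ≤ 3/4 := hx.2
    have hb1 : ((4:ℝ))⁻¹^(2*k-1) ≤ x^(2*k-1) := pow_le_pow_left₀ (by norm_num) (by linarith) _
    have hb2 : ((4:ℝ))⁻¹^(2*k-1) ≤ (1-x)^(2*k-1) := pow_le_pow_left₀ (by norm_num) (by linarith) _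
    have hp : (0:ℝ) < (4:ℝ)⁻¹^(2*k-1) := by positivity
    have h4 : (((4:ℝ)⁻¹)^(2*k-1))⁻¹ = 4^(2*k-1) := by rw [inv_pow, inv_inv]
    have t1 : (x^(2*k-1))⁻¹ ≤ 4^(2*k-1) := by
      have := inv_anti₀ hp hb1
      rwa [h4] at this
    have t2 : ((1-x)^(2*k-1))⁻¹ ≤ 4^(2*k-1) := by
      have := inv_anti₀ hp hb2
      rwa [h4] at this
    have hden : (x^(2*k-1))⁻¹ + ((1-x)^(2*k-1))⁻¹ ≤ 2 * 4^(2*k-1) := by linarith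
    have hdenn : 0 < (2:ℝ) * 4^(2*k-1) := by positivity
    rw [hg]; dsimp only
    rw [hc₀]
    apply inv_anti₀ _ hden
    have : (0:ℝ) < (x^(2*k-1))⁻¹ := inv_pos.2 (pow_pos (by linarith) _)
    have : (0:ℝ) ≤ ((1-x)^(2*k-1))⁻¹ := inv_nonneg.2 (pow_nonneg (by linarith) _)
    linarith
  linarith

lemma J_eq {k : ℕ} (hk : 1 ≤ k) :
    (∫ t in (0:ℝ)..1, 1 / (t ^ ((1:ℝ) - 2 * k) + (1 - t) ^ ((1:ℝ) - 2 * k)))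
      = ∫ t in (0:ℝ)..1, ((t^(2*k-1))⁻¹ + ((1-t)^(2*k-1))⁻¹)⁻¹ := by
  apply intervalIntegral.integral_congr
  intro t ht
  rw [Set.uIcc_of_le (by norm_num : (0:ℝ) ≤ 1)] at ht
  show 1 / (t ^ ((1:ℝ) - 2 * k) + (1 - t) ^ ((1:ℝ) - 2 * k))
      = ((t^(2*k-1))⁻¹ + ((1-t)^(2*k-1))⁻¹)⁻¹
  rw [rpow_helper hk ht.1, rpow_helper hk (by linarith [ht.2] : (0:ℝ) ≤ 1 - t), one_div]

lemma threshold {k : ℕ} (hk : 1 ≤ k) {A B c J : ℝ} (hA : 0 < A) (hB : 0 < B)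
    (hJ : 0 < J) (hc0 : 0 < c)
    (hc : c < (1 / (2 * Real.pi)) * ((A / B) * (1 / J)) ^ ((1:ℝ) / (2 * k))) :
    J * (2 * Real.pi * c)^(2*k) * B < A := by
  have hπ : (0:ℝ) < 2 * Real.pi := by positivity
  have hk' : (1:ℝ) ≤ (k:ℝ) := by exact_mod_cast hk
  have h2k0 : (0:ℝ) < 2 * (k:ℝ) := by linarith
  set R := (A / B) * (1 / J) with hR
  have hRpos : (0:ℝ) < R := by rw [hR]; positivity
  have key : 2 * Real.pi * c < R ^ ((1:ℝ) / (2 * k)) := by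
    have h2 := mul_lt_mul_of_pos_left hc hπ
    have e : (2 * Real.pi) * ((1 / (2 * Real.pi)) * R ^ ((1:ℝ) / (2 * k)))
        = R ^ ((1:ℝ) / (2 * k)) := by
      field_simp
    rw [e] at h2
    linarith [h2]
  have hpow : (2 * Real.pi * c)^(2*k) < (R ^ ((1:ℝ) / (2 * k)))^(2*k) :=
    pow_lt_pow_left₀ key (by positivity) (by omega)
  have hcollapse : (R ^ ((1:ℝ) / (2 * k)))^(2*k) = R := by
    rw [← Real.rpow_natCast (R ^ ((1:ℝ) / (2 * k))) (2*k), ← Real.rpow_mul hRpos.le]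
    have : (1:ℝ) / (2 * k) * ((2*k : ℕ) : ℝ) = 1 := by
      push_cast
      field_simp
    rw [this, Real.rpow_one]
  rw [hcollapse] at hpow
  have hAB : R = A / (B * J) := by rw [hR]; field_simp
  rw [hAB, lt_div_iff₀ (by positivity)] at hpow
  calc J * (2 * Real.pi * c)^(2*k) * B = (2 * Real.pi * c)^(2*k) * (B * J) := by ring
    _ < A := hpow

lemma eps_choice {A K : ℝ} (h : K < A) (M n : ℕ) :
    ∃ ε : ℝ, 0 < ε ∧ ε ≤ 1/2 ∧ K * (1+ε)^M < (1 - 4*ε) * ((1-ε)^n * A) := by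
  set f : ℝ → ℝ := fun ε => (1 - 4*ε) * ((1-ε)^n * A) - K * (1+ε)^M with hf
  have hcont : Continuous f := by fun_prop
  have hf0 : 0 < f 0 := by simp [hf]; linarith
  have hev : ∀ᶠ x in nhds (0:ℝ), 0 < f x :=
    (hcont.continuousAt.tendsto).eventually (eventually_gt_nhds hf0)
  rw [Metric.eventually_nhds_iff] at hev
  obtain ⟨δ, hδ, hball⟩ := hev
  refine ⟨min (δ/2) (1/2), by positivity, min_le_right _ _, ?_⟩
  have : 0 < f (min (δ/2) (1/2)) := by
    apply hball
    rw [Real.dist_eq, sub_zero, abs_of_pos (by positivity)]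
    calc min (δ/2) (1/2) ≤ δ/2 := min_le_left _ _
      _ < δ := by linarith
  simp only [hf] at this
  linarith

set_option maxHeartbeats 1600000 in
/-- Theorem 2.4 of the paper: conditional large gaps via the Brnetić–Pečarić inequality. -/
theorem large_gap_brnetic_pecaric (k : ℕ) (hk : 1 ≤ k)
    (Z Z' : ℝ → ℝ)
    (hderiv : ∀ t, HasDerivAt Z (Z' t) t) (hcont : Continuous Z')
    (A B : ℝ) (hA : 0 < A) (hB : 0 < B)
    (hmom : Tendsto (fun T : ℝ =>
        (∫ t in (0:ℝ)..T, (Z t) ^ (2 * k)) /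
          (T * (Real.log T) ^ (k ^ 2))) atTop (nhds A))
    (hder : Tendsto (fun T : ℝ =>
        (∫ t in (0:ℝ)..T, (Z' t) ^ (2 * k)) /
          (T * (Real.log T) ^ (k ^ 2 + 2 * k))) atTop (nhds B))
    (c : ℝ) (hc0 : 0 < c)
    (hc : c < (1 / (2 * Real.pi)) *
        ((A / B) * (1 / ∫ t in (0:ℝ)..1,
          1 / (t ^ ((1:ℝ) - 2 * k) + (1 - t) ^ ((1:ℝ) - 2 * k)))) ^ ((1:ℝ) / (2 * k))) :
    ∀ T₀ : ℝ, ∃ a : ℝ, T₀ < a ∧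
      ∀ t ∈ Set.Ioo a (a + c * (2 * Real.pi / Real.log a)), Z t ≠ 0 := by
  intro T₀
  by_contra hcon
  push_neg at hcon
  rw [J_eq hk] at hc
  set JJ := ∫ t in (0:ℝ)..1, ((t^(2*k-1))⁻¹ + ((1-t)^(2*k-1))⁻¹)⁻¹ with hJJ
  have hJpos : 0 < JJ := Jn_pos hk
  have hKA : JJ * (2*Real.pi*c)^(2*k) * B < A := threshold hk hA hB hJpos hc0 hc
  set m := k^2 + 2*k with hm
  set K := JJ * (2*Real.pi*c)^(2*k) * B with hK
  obtain ⟨ε, hε0, hε2, hKε⟩ := eps_choice hKA (2*k + (m+2)) (2*k)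
  have h1ε : (0:ℝ) < 1 - ε := by linarith
  -- eventually conditions
  have E0 : ∀ᶠ T : ℝ in atTop, (0:ℝ) < T := eventually_gt_atTop 0
  have E1 : ∀ᶠ T : ℝ in atTop, T₀ < ε*T :=
    (tendsto_id.const_mul_atTop hε0).eventually_gt_atTop T₀
  have E2 : ∀ᶠ T : ℝ in atTop, (1:ℝ) ≤ ε*T :=
    (tendsto_id.const_mul_atTop hε0).eventually_ge_atTop 1
  have E3a : ∀ᶠ T : ℝ in atTop, -Real.log ε ≤ ε * Real.log T :=
    (Real.tendsto_log_atTop.const_mul_atTop hε0).eventually_ge_atTop _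
  have E3b : ∀ᶠ T : ℝ in atTop, 0 < (1-ε) * Real.log T :=
    (Real.tendsto_log_atTop.const_mul_atTop h1ε).eventually_gt_atTop 0
  have E4 : ∀ᶠ T : ℝ in atTop,
      dist ((∫ t in (0:ℝ)..T, (Z t) ^ (2 * k)) / (T * (Real.log T) ^ (k ^ 2))) A < ε*A :=
    Metric.tendsto_nhds.mp hmom _ (by positivity)
  have E5 : ∀ᶠ T : ℝ in atTop,
      dist ((∫ t in (0:ℝ)..(2*ε*T), (Z t) ^ (2 * k)) /
        ((2*ε*T) * (Real.log (2*ε*T)) ^ (k ^ 2))) A < ε*A :=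
    (tendsto_id.const_mul_atTop (by positivity : (0:ℝ) < 2*ε)).eventually E4
  have E6 : ∀ᶠ T : ℝ in atTop,
      dist ((∫ t in (0:ℝ)..(T+1), (Z' t) ^ (2 * k)) /
        ((T+1) * (Real.log (T+1)) ^ m)) B < ε*B := by
    have h1 : Tendsto (fun T : ℝ => T + 1) atTop atTop :=
      tendsto_atTop_add_const_right atTop 1 tendsto_id
    exact h1.eventually (Metric.tendsto_nhds.mp hder _ (by positivity))
  have E7 : ∀ᶠ T : ℝ in atTop, (1:ℝ) < 2*ε*T :=
    (tendsto_id.const_mul_atTop (by positivity : (0:ℝ) < 2*ε)).eventually_gt_atTop 1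
  have E8 : ∀ᶠ T : ℝ in atTop, Real.log 2 ≤ ε * Real.log T :=
    (Real.tendsto_log_atTop.const_mul_atTop hε0).eventually_ge_atTop _
  have E9 : ∀ᶠ T : ℝ in atTop, (1+ε) * (2*Real.pi*c / ((1-ε)*Real.log T)) ≤ 1 := by
    have hd : Tendsto (fun T : ℝ => 2*Real.pi*c / ((1-ε)*Real.log T)) atTop (nhds 0) :=
      tendsto_const_nhds.div_atTop (Real.tendsto_log_atTop.const_mul_atTop h1ε)
    have := hd.const_mul (1+ε)
    rw [mul_zero] at this
    exact this.eventually_le_const (by norm_num)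
  obtain ⟨T, hT0, hT₁, hT1ε, hTlog, hTlogpos, hTmom, hTmom2, hTder, hT2ε, hTlog2, hTδ⟩ :=
    (E0.and (E1.and (E2.and (E3a.and (E3b.and (E4.and (E5.and (E6.and (E7.and
      (E8.and E9)))))))))).exists
  -- fixed T setup
  set L := Real.log T with hL
  have hLpos : 0 < L := by
    rcases lt_or_ge 0 L with h|h
    · exact h
    · exfalso
      have h2 : (1-ε)*L ≤ (1-ε)*0 := mul_le_mul_of_nonneg_left h (by linarith)
      rw [mul_zero] at h2
      linarith [hTlogpos]
  set Lε := (1-ε)*L with hLε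
  have hLεpos : 0 < Lε := hTlogpos
  set δu := 2*Real.pi*c/Lε with hδu
  have hδupos : 0 < δu := by positivity
  set θ := ε*δu with hθ
  have hθpos : 0 < θ := by positivity
  set T₁ := ε*T with hT₁def
  have hT₁pos : 0 < T₁ := by positivity
  have hδu1 : δu ≤ 1 := by
    have h2 : 0 ≤ ε*δu := mul_nonneg hε0.le hδupos.le
    linarith [hTδ]
  have hlogT₁ : Lε ≤ Real.log T₁ := by
    rw [hT₁def, Real.log_mul (ne_of_gt hε0) (ne_of_gt hT0)]
    rw [hLε]
    have h2 : 0 ≤ ε*L := mul_nonneg hε0.le hLpos.le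
    linarith [hTlog]
  have hδbound : ∀ a : ℝ, T₁ ≤ a → c * (2*Real.pi/Real.log a) ≤ δu := by
    intro a ha
    have hla : Lε ≤ Real.log a :=
      le_trans hlogT₁ (Real.log_le_log hT₁pos ha)
    have : c * (2*Real.pi/Real.log a) = 2*Real.pi*c/Real.log a := by ring
    rw [this, hδu]
    exact div_le_div_of_nonneg_left (by positivity) hLεpos hla
  -- choice function for zeros
  obtain ⟨F, hF⟩ : ∃ F : ℝ → ℝ, ∀ a, T₀ < a →
      F a ∈ Set.Ioo a (a + c*(2*Real.pi/Real.log a)) ∧ Z (F a) = 0 :=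
    ⟨fun a => if ha : T₀ < a then (hcon a ha).choose else 0,
     fun a ha => by simp only [dif_pos ha]; exact (hcon a ha).choose_spec⟩
  obtain ⟨z, hz0, hzs⟩ : ∃ z : ℕ → ℝ, z 0 = F T₁ ∧ ∀ n, z (n+1) = F (z n + θ) :=
    ⟨fun n => Nat.rec (F T₁) (fun _ p => F (p + θ)) n, rfl, fun n => rfl⟩
  have hinv : ∀ n, T₁ < z n ∧ Z (z n) = 0 := by
    intro n
    induction n with
    | zero =>
      have hsp := hF T₁ hT₁
      exact ⟨by rw [hz0]; exact hsp.1.1, by rw [hz0]; exact hsp.2⟩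
    | succ n ih =>
      have h1 : T₀ < z n + θ := by linarith [ih.1]
      have hsp := hF _ h1
      refine ⟨?_, by rw [hzs n]; exact hsp.2⟩
      rw [hzs n]
      have := hsp.1.1
      linarith [ih.1]
  have hgap : ∀ n, z n + θ < z (n+1) ∧ z (n+1) < z n + θ + δu := by
    intro n
    have h1 : T₀ < z n + θ := by linarith [(hinv n).1]
    have hsp := hF _ h1
    refine ⟨by rw [hzs n]; exact hsp.1.1, ?_⟩
    have hd := hδbound (z n + θ) (by linarith [(hinv n).1])
    rw [hzs n]
    have := hsp.1.2
    linarith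
  have hgrow : ∀ n, T₁ + n*θ ≤ z n := by
    intro n
    induction n with
    | zero => simp; linarith [(hinv 0).1]
    | succ n ih =>
      have := (hgap n).1
      push_cast
      push_cast at ih
      linarith
  have hex : ∃ n, T ≤ z n := by
    obtain ⟨n, hn⟩ := exists_nat_ge ((T - T₁)/θ)
    refine ⟨n, ?_⟩
    have : (T - T₁) ≤ n*θ := by
      rw [div_le_iff₀ hθpos] at hn
      linarith
    linarith [hgrow n]
  obtain ⟨N, hNT, hNmin⟩ : ∃ N : ℕ, T ≤ z N ∧ ∀ m', m' < N → z m' < T := by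
    classical
    exact ⟨Nat.find hex, Nat.find_spec hex, fun m' hm' =>
      lt_of_not_ge (Nat.find_min hex hm')⟩
  have hz0ub : z 0 < 2*T₁ := by
    have hsp := hF T₁ hT₁
    have := hsp.1.2
    have hd := hδbound T₁ (le_refl _)
    rw [hz0]
    have h1T₁ : (1:ℝ) ≤ T₁ := hT1ε
    linarith [hδu1]
  have h2T₁T : 2*T₁ ≤ T := by
    rw [hT₁def]
    have h12 : (0:ℝ) ≤ T*(1-2*ε) := mul_nonneg hT0.le (by linarith)
    linarith [h12]
  have hzNub : z N < T + 1 := by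
    rcases Nat.eq_zero_or_pos N with h | h
    · exfalso
      rw [h] at hNT
      linarith [hz0ub]
    · obtain ⟨M, hM⟩ := Nat.exists_eq_succ_of_ne_zero (Nat.pos_iff_ne_zero.mp h)
      have hMN : M < N := by omega
      have hzM := hNmin M hMN
      have := (hgap M).2
      rw [hM]
      have hθδ : θ + δu ≤ 1 := by
        rw [hθ]
        calc ε*δu + δu = (1+ε)*δu := by ring
          _ = (1+ε)*(2*Real.pi*c/((1-ε)*L)) := by rw [hδu, hLε]
          _ ≤ 1 := hTδ
      linarith
  -- integrals
  have hZc : Continuous Z :=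
    continuous_iff_continuousAt.2 (fun t => (hderiv t).differentiableAt.continuousAt)
  have hPint : ∀ a b : ℝ, IntervalIntegrable (fun t => Z t ^ (2*k)) volume a b :=
    fun a b => ((hZc.pow _).intervalIntegrable a b)
  have hQint : ∀ a b : ℝ, IntervalIntegrable (fun t => Z' t ^ (2*k)) volume a b :=
    fun a b => ((hcont.pow _).intervalIntegrable a b)
  have hQnn : ∀ a b : ℝ, a ≤ b → 0 ≤ ∫ t in a..b, Z' t ^ (2*k) := fun a b hab =>
    intervalIntegral.integral_nonneg hab (fun u _ => (even_two_mul k).pow_nonneg _)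
  have hPnn : ∀ a b : ℝ, a ≤ b → 0 ≤ ∫ t in a..b, Z t ^ (2*k) := fun a b hab =>
    intervalIntegral.integral_nonneg hab (fun u _ => (even_two_mul k).pow_nonneg _)
  have hzmono : ∀ n, z n < z (n+1) := fun n => by linarith [(hgap n).1]
  have hsum1 : ∑ n ∈ Finset.range N, ∫ t in z n..z (n+1), Z t ^ (2*k)
      = ∫ t in (z 0)..(z N), Z t ^ (2*k) :=
    intervalIntegral.sum_integral_adjacent_intervals (fun i _ => hPint _ _)
  have hsum2 : ∑ n ∈ Finset.range N, ∫ t in z n..z (n+1), Z' t ^ (2*k)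
      = ∫ t in (z 0)..(z N), Z' t ^ (2*k) :=
    intervalIntegral.sum_integral_adjacent_intervals (fun i _ => hQint _ _)
  set C := JJ * ((1+ε)*δu)^(2*k) with hC
  have hCnn : 0 ≤ C := by positivity
  have hterm : ∀ n, (∫ t in z n..z (n+1), Z t ^ (2*k))
      ≤ C * ∫ t in z n..z (n+1), Z' t ^ (2*k) := by
    intro n
    have hw := wirtinger hderiv hcont hk (hzmono n) (hinv n).2 (hinv (n+1)).2
    refine le_trans hw ?_
    have hgapb : (z (n+1) - z n)^(2*k) ≤ ((1+ε)*δu)^(2*k) := by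
      apply pow_le_pow_left₀ (by linarith [hzmono n])
      have := (hgap n).2
      rw [hθ] at this
      linarith
    have h1 : JJ * (z (n+1) - z n)^(2*k) ≤ C := by
      rw [hC]
      exact mul_le_mul_of_nonneg_left hgapb hJpos.le
    exact mul_le_mul_of_nonneg_right h1 (hQnn _ _ (hzmono n).le)
  have hXY : (∫ t in (z 0)..(z N), Z t ^ (2*k)) ≤ C * ∫ t in (z 0)..(z N), Z' t ^ (2*k) := by
    rw [← hsum1, ← hsum2, Finset.mul_sum]
    exact Finset.sum_le_sum (fun i _ => hterm i)
  -- moment bounds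
  have hTL : 0 < T*L^(k^2) := by positivity
  have hlow : (1-ε)*A*(T*L^(k^2)) ≤ ∫ t in (0:ℝ)..T, Z t ^ (2*k) := by
    rw [Real.dist_eq, abs_lt] at hTmom
    have h' : (1-ε)*A < (∫ t in (0:ℝ)..T, Z t ^ (2*k))/(T*L^(k^2)) := by
      have := hTmom.1
      linarith
    rw [lt_div_iff₀ hTL] at h'
    linarith
  have h2εT : (0:ℝ) < 2*ε*T := by positivity
  have hlog2ε : (0:ℝ) < Real.log (2*ε*T) := Real.log_pos hT2ε
  have hd2 : 0 < (2*ε*T) * (Real.log (2*ε*T))^(k^2) := by positivity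
  have hup2 : (∫ t in (0:ℝ)..(2*ε*T), Z t ^ (2*k))
      ≤ 2*ε*(1+ε)*A*(T*L^(k^2)) := by
    rw [Real.dist_eq, abs_lt] at hTmom2
    have h' : (∫ t in (0:ℝ)..(2*ε*T), Z t ^ (2*k))/((2*ε*T) * (Real.log (2*ε*T))^(k^2))
        < (1+ε)*A := by
      have := hTmom2.2
      linarith
    rw [div_lt_iff₀ hd2] at h'
    have hle : Real.log (2*ε*T) ≤ L := by
      rw [hL]
      refine Real.log_le_log h2εT ?_
      have h12 : (0:ℝ) ≤ T*(1-2*ε) := mul_nonneg hT0.le (by linarith)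
      linarith [h12]
    have hpow : (Real.log (2*ε*T))^(k^2) ≤ L^(k^2) := pow_le_pow_left₀ hlog2ε.le hle _
    have hstep : (1+ε)*A*((2*ε*T) * (Real.log (2*ε*T))^(k^2))
        ≤ (1+ε)*A*((2*ε*T) * L^(k^2)) := by
      apply mul_le_mul_of_nonneg_left ?_ (by positivity)
      exact mul_le_mul_of_nonneg_left hpow (by positivity)
    calc (∫ t in (0:ℝ)..(2*ε*T), Z t ^ (2*k))
        ≤ (1+ε)*A*((2*ε*T) * (Real.log (2*ε*T))^(k^2)) := h'.le
      _ ≤ (1+ε)*A*((2*ε*T) * L^(k^2)) := hstep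
      _ = 2*ε*(1+ε)*A*(T*L^(k^2)) := by ring
  -- lower bound for X
  have hz02ε : z 0 ≤ 2*ε*T := by
    have h2 : 2*T₁ = 2*ε*T := by rw [hT₁def]; ring
    linarith [hz0ub]
  have hz00 : (0:ℝ) ≤ z 0 := by linarith [(hinv 0).1]
  have hadj1 : (∫ t in (0:ℝ)..(z 0), Z t ^ (2*k)) + (∫ t in (z 0)..(z N), Z t ^ (2*k))
      = ∫ t in (0:ℝ)..(z N), Z t ^ (2*k) :=
    intervalIntegral.integral_add_adjacent_intervals (hPint _ _) (hPint _ _)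
  have hadj2 : (∫ t in (0:ℝ)..T, Z t ^ (2*k)) + (∫ t in T..(z N), Z t ^ (2*k))
      = ∫ t in (0:ℝ)..(z N), Z t ^ (2*k) :=
    intervalIntegral.integral_add_adjacent_intervals (hPint _ _) (hPint _ _)
  have hadj3 : (∫ t in (0:ℝ)..(z 0), Z t ^ (2*k)) + (∫ t in (z 0)..(2*ε*T), Z t ^ (2*k))
      = ∫ t in (0:ℝ)..(2*ε*T), Z t ^ (2*k) :=
    intervalIntegral.integral_add_adjacent_intervals (hPint _ _) (hPint _ _)
  have hXlow2 : (1-4*ε)*(A*(T*L^(k^2))) ≤ ∫ t in (z 0)..(z N), Z t ^ (2*k) := by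
    have nn1 : 0 ≤ ∫ t in T..(z N), Z t ^ (2*k) := hPnn _ _ hNT
    have nn2 : 0 ≤ ∫ t in (z 0)..(2*ε*T), Z t ^ (2*k) := hPnn _ _ hz02ε
    have hcube : 0 ≤ ε*(1-2*ε)*(A*(T*L^(k^2))) :=
      mul_nonneg (mul_nonneg hε0.le (by linarith)) (mul_nonneg hA.le hTL.le)
    linarith [hlow, hup2, hcube, nn1, nn2, hadj1, hadj2, hadj3]
  -- upper bound for Y
  have hmono0 : ∀ n, z 0 ≤ z n := by
    intro n
    induction n with
    | zero => exact le_refl _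
    | succ n ih => linarith [(hgap n).1]
  have hQadj1 : (∫ t in (0:ℝ)..(z 0), Z' t ^ (2*k)) + (∫ t in (z 0)..(z N), Z' t ^ (2*k))
      = ∫ t in (0:ℝ)..(z N), Z' t ^ (2*k) :=
    intervalIntegral.integral_add_adjacent_intervals (hQint _ _) (hQint _ _)
  have hQadj2 : (∫ t in (0:ℝ)..(z N), Z' t ^ (2*k)) + (∫ t in (z N)..(T+1), Z' t ^ (2*k))
      = ∫ t in (0:ℝ)..(T+1), Z' t ^ (2*k) :=
    intervalIntegral.integral_add_adjacent_intervals (hQint _ _) (hQint _ _)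
  have hYup : (∫ t in (z 0)..(z N), Z' t ^ (2*k)) ≤ ∫ t in (0:ℝ)..(T+1), Z' t ^ (2*k) := by
    have nn1 : 0 ≤ ∫ t in (0:ℝ)..(z 0), Z' t ^ (2*k) := hQnn _ _ hz00
    have nn2 : 0 ≤ ∫ t in (z N)..(T+1), Z' t ^ (2*k) := hQnn _ _ hzNub.le
    linarith
  have hlogT1pos : (0:ℝ) < Real.log (T+1) := Real.log_pos (by linarith)
  have hdT1 : 0 < (T+1)*(Real.log (T+1))^m := by positivity
  have hder1 : (∫ t in (0:ℝ)..(T+1), Z' t ^ (2*k))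
      ≤ (1+ε)*B*((T+1)*(Real.log (T+1))^m) := by
    rw [Real.dist_eq, abs_lt] at hTder
    have h' : (∫ t in (0:ℝ)..(T+1), Z' t ^ (2*k))/((T+1)*(Real.log (T+1))^m)
        < (1+ε)*B := by
      have := hTder.2
      linarith
    rw [div_lt_iff₀ hdT1] at h'
    linarith
  have hder2 : (1+ε)*B*((T+1)*(Real.log (T+1))^m) ≤ (1+ε)^(m+2)*B*(T*L^m) := by
    have hT1' : T+1 ≤ (1+ε)*T := by
      have : (1+ε)*T = T + ε*T := by ring
      linarith [hT1ε]
    have hlogT1 : Real.log (T+1) ≤ (1+ε)*L := by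
      have h2T : Real.log (T+1) ≤ Real.log (2*T) :=
        Real.log_le_log (by linarith) (by linarith)
      rw [Real.log_mul two_ne_zero (ne_of_gt hT0)] at h2T
      rw [← hL] at h2T
      linarith [hTlog2]
    have hpowm : (Real.log (T+1))^m ≤ ((1+ε)*L)^m :=
      pow_le_pow_left₀ hlogT1pos.le hlogT1 _
    calc (1+ε)*B*((T+1)*(Real.log (T+1))^m)
        ≤ (1+ε)*B*(((1+ε)*T)*(((1+ε)*L)^m)) := by
          apply mul_le_mul_of_nonneg_left ?_ (by positivity)
          exact mul_le_mul hT1' hpowm (by positivity) (by positivity)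
      _ = (1+ε)^(m+2)*B*(T*L^m) := by rw [mul_pow]; ring
  -- final combination
  have hfinal1 : (1-4*ε)*(A*(T*L^(k^2))) ≤ C*((1+ε)^(m+2)*B*(T*L^m)) := by
    refine le_trans hXlow2 (le_trans hXY ?_)
    exact mul_le_mul_of_nonneg_left (le_trans hYup (le_trans hder1 hder2)) hCnn
  have hLεpow : (0:ℝ) ≤ Lε^(2*k) := by positivity
  have hmul := mul_le_mul_of_nonneg_right hfinal1 hLεpow
  have hCL : C * Lε^(2*k) = JJ*((1+ε)*(2*Real.pi*c))^(2*k) := by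
    rw [hC, mul_assoc, ← mul_pow]
    congr 2
    rw [hδu]
    field_simp
  have hLm : L^(k^2) * L^(2*k) = L^m := by rw [hm, pow_add]
  have lhs_eq : (1-4*ε)*(A*(T*L^(k^2))) * Lε^(2*k)
      = ((1-4*ε)*((1-ε)^(2*k)*A))*(T*L^m) := by
    calc (1-4*ε)*(A*(T*L^(k^2))) * Lε^(2*k)
        = (1-4*ε)*((1-ε)^(2*k)*A)*(T*(L^(k^2)*L^(2*k))) := by rw [hLε, mul_pow]; ring
      _ = ((1-4*ε)*((1-ε)^(2*k)*A))*(T*L^m) := by rw [hLm]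
  have rhs_eq : C*((1+ε)^(m+2)*B*(T*L^m)) * Lε^(2*k)
      = (K*(1+ε)^(2*k+(m+2)))*(T*L^m) := by
    calc C*((1+ε)^(m+2)*B*(T*L^m)) * Lε^(2*k)
        = (C*Lε^(2*k))*((1+ε)^(m+2)*B*(T*L^m)) := by ring
      _ = (JJ*((1+ε)*(2*Real.pi*c))^(2*k))*((1+ε)^(m+2)*B*(T*L^m)) := by rw [hCL]
      _ = (K*(1+ε)^(2*k+(m+2)))*(T*L^m) := by rw [hK, mul_pow]; ring
  rw [lhs_eq, rhs_eq] at hmul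
  have hTLm : 0 < T*L^m := by positivity
  have hcontra := mul_lt_mul_of_pos_right hKε hTLm
  linarith
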